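/- arXiv:2303.04461 — 3 statements merged into one kernel-verified Lean document; each statement's English description precedes it below -/
import Mathlib

section
/- Let A be an evolution algebra with natural basis B and let I be a maximal ideal of A with dim(A/I) ≠ 1. Then for any e ∈ B, e² ∈ I implies e ∈ I; in other words H_I = I ∩ B. -/
variable {K ι A : Type*}

section Defs
variable [Field K] [NonUnitalNonAssocCommRing A] [Module K A]
  [SMulCommClass K A A] [IsScalarTower K A A]

/-- A natural basis: distinct basis elements multiply to zero. -/
def IsNaturalBasis (b : Module.Basis ι K A) : Prop := ∀ i j : ι, i ≠ j → b i * b j = 0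

/-- Edge i → j in the associated graph: the j-th coordinate of (b i)² is nonzero. -/
def EvolEdge (b : Module.Basis ι K A) (i j : ι) : Prop := b.repr (b i * b i) j ≠ 0

/-- Hereditary subset of vertices: closed under edges (hence under reachability). -/
def EvolHereditary (b : Module.Basis ι K A) (H : Set ι) : Prop :=
  ∀ i ∈ H, ∀ j, EvolEdge b i j → j ∈ H

/-- Saturated subset: a regular vertex all of whose edge-targets lie in H belongs to H. -/
def EvolSaturated (b : Module.Basis ι K A) (H : Set ι) : Prop :=
  ∀ i : ι, b i * b i ≠ 0 → (∀ j, EvolEdge b i j → j ∈ H) → i ∈ H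

/-- Ideal of a (nonunital, nonassociative, commutative) algebra: a submodule absorbing
multiplication. -/
def IsEvolIdeal (I : Submodule K A) : Prop := ∀ a : A, ∀ x ∈ I, a * x ∈ I

/-- I_H, the span of the basis elements indexed by H. -/
def idealOf (b : Module.Basis ι K A) (H : Set ι) : Submodule K A := Submodule.span K (b '' H)

/-- H_I = {e ∈ B : e² ∈ I}. -/
def hSet (b : Module.Basis ι K A) (I : Submodule K A) : Set ι := {i | b i * b i ∈ I}

/-- Maximal ideal. -/
def IsMaxIdeal (I : Submodule K A) : Prop :=
  IsEvolIdeal I ∧ I ≠ ⊤ ∧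
    ∀ J : Submodule K A, IsEvolIdeal J → I ≤ J → J = I ∨ J = ⊤

/-- Absorption property of an ideal. -/
def Absorption (I : Submodule K A) : Prop := ∀ x : A, (∀ a : A, x * a ∈ I) → x ∈ I

end Defs

/-- A², the span of all products. -/
def sqIdeal (K A : Type*) [Field K] [NonUnitalNonAssocCommRing A] [Module K A] :
    Submodule K A :=
  Submodule.span K {x : A | ∃ a c : A, x = a * c}

/-!
If `e² ∈ I` for a basis vector `e ∉ I`, then `e A = K e²` shows that `I + K e` is an ideal
strictly containing `I`. By maximality it is all of `A`, so `A / I` is spanned by the image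
of `e` and has dimension one.
-/

open Submodule

theorem Submodule.rank_quotient_eq_one_of_sup_span_singleton_eq_top {V : Type*} [DivisionRing K]
    [AddCommGroup V] [Module K V] {p : Submodule K V} {x : V} (hp : p ≠ ⊤)
    (h : p ⊔ K ∙ x = ⊤) : Module.rank K (V ⧸ p) = 1 := by
  refine rank_eq_one_iff.2 ⟨Quotient.mk x, fun hx ↦ hp ?_, fun v ↦ ?_⟩
  · rw [Quotient.mk_eq_zero] at hx
    rwa [sup_eq_left.2 ((span_singleton_le_iff_mem x p).2 hx)] at h
  · obtain ⟨y, rfl⟩ := Quotient.mk_surjective p v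
    obtain ⟨z, hz, w, hw, rfl⟩ := mem_sup.1 (h ▸ mem_top : y ∈ p ⊔ K ∙ x)
    obtain ⟨c, rfl⟩ := mem_span_singleton.1 hw
    refine ⟨c, ?_⟩
    rw [← Quotient.mk_smul, Quotient.eq, sub_add_cancel_right]
    exact p.neg_mem hz

section NaturalBasis

variable [Field K] [NonUnitalNonAssocCommRing A] [Module K A]

theorem IsNaturalBasis.mul_basis [IsScalarTower K A A] {b : Module.Basis ι K A}
    (hb : IsNaturalBasis b) (a : A) (i : ι) : a * b i = b.repr a i • (b i * b i) := by
  conv_lhs => rw [← b.linearCombination_repr a]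
  rw [Finsupp.linearCombination_apply, ← LinearMap.mulRight_apply (R := K), map_finsuppSum,
    Finsupp.sum_eq_single i (fun j _ hji ↦ by simp [hb j i hji]) (by simp)]
  simp

theorem IsEvolIdeal.sup_span_singleton_basis [SMulCommClass K A A] [IsScalarTower K A A]
    {b : Module.Basis ι K A} (hb : IsNaturalBasis b) {I : Submodule K A} (hI : IsEvolIdeal I)
    {i : ι} (hsq : b i * b i ∈ I) : IsEvolIdeal (I ⊔ K ∙ b i) := by
  intro a x hx
  obtain ⟨y, hy, z, hz, rfl⟩ := mem_sup.1 hx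
  obtain ⟨c, rfl⟩ := mem_span_singleton.1 hz
  rw [mul_add, mul_smul_comm, hb.mul_basis]
  exact mem_sup_left (I.add_mem (hI a y hy) (I.smul_mem _ (I.smul_mem _ hsq)))

end NaturalBasis

variable [Field K] [NonUnitalNonAssocCommRing A] [Module K A]
  [SMulCommClass K A A] [IsScalarTower K A A]

theorem stmt13 (b : Module.Basis ι K A) (hb : IsNaturalBasis b) (I : Submodule K A)
    (hI : IsMaxIdeal I) (hr : Module.rank K (A ⧸ I) ≠ 1) :
    hSet b I = {i : ι | b i ∈ I} := by
  obtain ⟨hIdeal, hne, hmax⟩ := hI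
  ext i
  refine ⟨fun hsq ↦ ?_, fun hi ↦ hIdeal (b i) _ hi⟩
  by_contra hi
  rcases hmax _ (hIdeal.sup_span_singleton_basis hb hsq) le_sup_left with h | h
  · exact hi (h ▸ mem_sup_right (mem_span_singleton_self _))
  · exact hr (rank_quotient_eq_one_of_sup_span_singleton_eq_top hne h)
end

section
/- If A is an evolution algebra over K that is finitely generated as a K-algebra, then the vertex set E^0 of its associated directed graph equals the hereditary closure of some finite subset of E^0. -/
/-! The subspace spanned by a hereditary set of basis vectors is closed under multiplication,
because a natural basis makes every product of basis vectors either zero or a square `eᵢ²`,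
whose support consists of the successors of `i`. The vertices reachable from the supports of
finitely many generators therefore span a subalgebra containing the generators, hence
everything. -/

variable {K ι A : Type*}

variable [Field K] [NonUnitalNonAssocCommRing A] [Module K A]
  [SMulCommClass K A A] [IsScalarTower K A A]

section

variable (b : Module.Basis ι K A) {H : Set ι}

omit [SMulCommClass K A A] [IsScalarTower K A A] in
theorem mem_idealOf_iff {x : A} : x ∈ idealOf b H ↔ ↑(b.repr x).support ⊆ H :=
  b.mem_span_image

omit [SMulCommClass K A A] [IsScalarTower K A A] in
theorem mem_of_basis_mem_idealOf {i : ι} (h : b i ∈ idealOf b H) : i ∈ H :=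
  (mem_idealOf_iff b).1 h (by simp)

omit [SMulCommClass K A A] [IsScalarTower K A A] in
theorem evolHereditary_reachable (S : Set ι) :
    EvolHereditary b {j | ∃ s ∈ S, Relation.ReflTransGen (EvolEdge b) s j} := by
  rintro i ⟨s, hs, hsi⟩ j hij
  exact ⟨s, hs, hsi.tail hij⟩

variable {b}

omit [SMulCommClass K A A] [IsScalarTower K A A] in
theorem mul_self_mem_idealOf (hH : EvolHereditary b H) {i : ι} (hi : i ∈ H) :
    b i * b i ∈ idealOf b H :=
  (mem_idealOf_iff b).2 fun j hj => hH i hi j (Finsupp.mem_support_iff.1 hj)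

theorem mul_mem_idealOf (hb : IsNaturalBasis b) (hH : EvolHereditary b H) {x y : A}
    (hx : x ∈ idealOf b H) (hy : y ∈ idealOf b H) : x * y ∈ idealOf b H := by
  suffices Submodule.map₂ (LinearMap.mul K A) (idealOf b H) (idealOf b H) ≤ idealOf b H from
    this (Submodule.apply_mem_map₂ _ hx hy)
  rw [idealOf, Submodule.map₂_span_span, Submodule.span_le]
  rintro _ ⟨_, ⟨i, hi, rfl⟩, _, ⟨j, -, rfl⟩, rfl⟩
  rcases eq_or_ne i j with rfl | hij
  · exact mul_self_mem_idealOf hH hi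
  · simp [hb i j hij]

theorem eq_univ_of_evolHereditary_of_adjoin_eq_top (hb : IsNaturalBasis b)
    (hH : EvolHereditary b H) {s : Set A} (hs : NonUnitalAlgebra.adjoin K s = ⊤)
    (hsH : s ⊆ idealOf b H) : H = Set.univ := by
  let B := (idealOf b H).toNonUnitalSubalgebra fun _ _ => mul_mem_idealOf hb hH
  have htop : ⊤ ≤ B := hs ▸ NonUnitalAlgebra.adjoin_le hsH
  exact Set.eq_univ_of_forall fun i => mem_of_basis_mem_idealOf b (htop trivial)

end

theorem stmt14 (b : Module.Basis ι K A) (hb : IsNaturalBasis b)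
    (hfg : ∃ s : Finset A, NonUnitalAlgebra.adjoin K (s : Set A) = ⊤) :
    ∃ S : Finset ι, ∀ i : ι, ∃ s ∈ S, Relation.ReflTransGen (EvolEdge b) s i := by
  classical
  obtain ⟨s, hs⟩ := hfg
  let S := s.biUnion fun g => (b.repr g).support
  let R := {j | ∃ t ∈ (S : Set ι), Relation.ReflTransGen (EvolEdge b) t j}
  have hsR : (s : Set A) ⊆ idealOf b R := fun g hg => (mem_idealOf_iff b).2 fun k hk =>
    ⟨k, Finset.mem_biUnion.2 ⟨g, hg, hk⟩, Relation.ReflTransGen.refl⟩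
  have hR : R = Set.univ :=
    eq_univ_of_evolHereditary_of_adjoin_eq_top hb (evolHereditary_reachable b _) hs hsR
  exact ⟨S, fun i => (Set.eq_univ_iff_forall.1 hR) i⟩
end

section
/- Let A be a finite-dimensional perfect evolution algebra (A² = A) and I an ideal of A. Then I = I_{H_I} (so dim I = |H_I| and I is spanned by the basis elements whose squares lie in I), and consequently I has the absorption property. -/
/-!
For a natural basis `b`, `x * b j = b.repr x j • (b j * b j)`. Hence if `x * A ⊆ I` (in particular
if `x ∈ I`) and `b.repr x j ≠ 0`, then `b j * b j ∈ I`; this gives `I ≤ I_{H_I}` and, once equality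
is known, the absorption property. Perfection says the squares `b j * b j` span `A`, so by counting
dimensions they are linearly independent. Then `span {b j * b j | j ∈ H_I} ≤ I ≤ I_{H_I}`, and both
ends have dimension `|H_I|`, so they coincide.
-/

variable {K ι A : Type*}

theorem Submodule.span_image_eq_of_le_of_linearIndependent [Field K] {V : Type*}
    [AddCommGroup V] [Module K V] {v w : ι → V} (hv : LinearIndependent K v)
    (hw : LinearIndependent K w) {S : Set ι} (hS : S.Finite)
    (h : Submodule.span K (w '' S) ≤ Submodule.span K (v '' S)) :
    Submodule.span K (w '' S) = Submodule.span K (v '' S) := by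
  have := hS.fintype
  have := FiniteDimensional.span_of_finite K (hS.image v)
  refine Submodule.eq_of_le_of_finrank_le h (le_of_eq ?_)
  rw [Set.image_eq_range, Set.image_eq_range,
    finrank_span_eq_card (b := fun i : S => v i) (hv.comp _ Subtype.val_injective),
    finrank_span_eq_card (b := fun i : S => w i) (hw.comp _ Subtype.val_injective)]

namespace IsNaturalBasis

variable [Field K] [NonUnitalNonAssocCommRing A] [Module K A] [IsScalarTower K A A]
  {b : Module.Basis ι K A}

theorem mul_basis_s18 (hb : IsNaturalBasis b) (x : A) (i : ι) :
    x * b i = b.repr x i • (b i * b i) := by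
  have : LinearMap.mulRight K (b i) =
      LinearMap.smulRight (LinearMap.id : K →ₗ[K] K) (b i * b i) ∘ₗ b.coord i := by
    refine b.ext fun j => ?_
    obtain rfl | hji := eq_or_ne j i
    · simp
    · simp [hb j i hji, Finsupp.single_eq_of_ne' hji]
  exact LinearMap.congr_fun this x

theorem mem_idealOf_hSet (hb : IsNaturalBasis b) {I : Submodule K A} {x : A}
    (hx : ∀ j, x * b j ∈ I) : x ∈ idealOf b (hSet b I) := by
  rw [idealOf, b.mem_span_image]
  intro j hj
  have hxj : b.repr x j ≠ 0 := Finsupp.mem_support_iff.1 hj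
  have := I.smul_mem (b.repr x j)⁻¹ (hx j)
  rwa [hb.mul_basis_s18, smul_smul, inv_mul_cancel₀ hxj, one_smul] at this

theorem le_idealOf_hSet (hb : IsNaturalBasis b) {I : Submodule K A} (hI : IsEvolIdeal I) :
    I ≤ idealOf b (hSet b I) :=
  fun x hx => hb.mem_idealOf_hSet fun j => mul_comm (b j) x ▸ hI (b j) x hx

theorem sqIdeal_eq_span [SMulCommClass K A A] (hb : IsNaturalBasis b) :
    sqIdeal K A = Submodule.span K (Set.range fun i => b i * b i) := by
  refine le_antisymm (Submodule.span_le.2 ?_) (Submodule.span_le.2 ?_)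
  · rintro _ ⟨x, c, rfl⟩
    induction b.mem_span c using Submodule.span_induction with
    | mem _ h =>
      obtain ⟨i, rfl⟩ := h
      rw [hb.mul_basis_s18]
      exact Submodule.smul_mem _ _ (Submodule.subset_span ⟨i, rfl⟩)
    | zero => simp
    | add c d _ _ hc hd => rw [mul_add]; exact Submodule.add_mem _ hc hd
    | smul r c _ hc => rw [mul_smul_comm]; exact Submodule.smul_mem _ r hc
  · rintro _ ⟨i, rfl⟩
    exact Submodule.subset_span ⟨b i, b i, rfl⟩

theorem linearIndependent_sq [SMulCommClass K A A] [FiniteDimensional K A]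
    (hb : IsNaturalBasis b) (hperf : sqIdeal K A = ⊤) :
    LinearIndependent K fun i => b i * b i :=
  have := FiniteDimensional.fintypeBasisIndex b
  linearIndependent_of_top_le_span_of_card_eq_finrank (by rw [← hb.sqIdeal_eq_span, hperf])
    (Module.finrank_eq_card_basis b).symm

end IsNaturalBasis

variable [Field K] [NonUnitalNonAssocCommRing A] [Module K A]
  [SMulCommClass K A A] [IsScalarTower K A A]

theorem stmt18 [FiniteDimensional K A] (b : Module.Basis ι K A) (hb : IsNaturalBasis b)
    (hperf : sqIdeal K A = ⊤) (I : Submodule K A) (hI : IsEvolIdeal I) :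
    I = idealOf b (hSet b I) ∧ Absorption I := by
  have := Module.Finite.finite_basis b
  have hle := hb.le_idealOf_hSet hI
  have hsq : Submodule.span K ((fun i => b i * b i) '' hSet b I) ≤ I :=
    Submodule.span_le.2 (Set.image_subset_iff.2 fun _ hi => hi)
  have hspan : Submodule.span K ((fun i => b i * b i) '' hSet b I) = idealOf b (hSet b I) :=
    Submodule.span_image_eq_of_le_of_linearIndependent b.linearIndependent
      (hb.linearIndependent_sq hperf) (Set.toFinite _) (hsq.trans hle)
  have hI_eq : I = idealOf b (hSet b I) := le_antisymm hle (hspan ▸ hsq)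
  refine ⟨hI_eq, fun x hx => ?_⟩
  rw [hI_eq]
  exact hb.mem_idealOf_hSet fun j => hx (b j)
end
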